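/- Let T be a perfect tiling subset of G for parameter n. Then: (1) Σ_{g∈G} m₂(g) = 4n² + 4n + 1; (2) |G| = 2n² + 1 (the sets X_i = {g ∈ G : m₂(g) = i} partition G); and (3) 2·|{g ∈ G : m₂(g) ≥ 1}| = 2 − |T* ∩ T^(2)*| + Σ_{g ∈ G, m₂(g) ≥ 1} (m₂(g) − 1)(m₂(g) − 2). -/

import Mathlib

/-- `T` is a perfect tiling subset of `G` for parameter `n`:
`|G| = 2n²+1`, `|T| = 2n+1`, `e ∈ T`, `T = T⁽⁻¹⁾`, and
`T·T = 2·G + T⁽²⁾ + (2n-2)·e` in the integral group ring `ℤ[G]`. -/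
def IsPerfectTilingSubset (n : ℕ) {G : Type} [CommGroup G] [Fintype G] [DecidableEq G]
    (T : Finset G) : Prop :=
  Fintype.card G = 2 * n ^ 2 + 1 ∧
  T.card = 2 * n + 1 ∧
  (1 : G) ∈ T ∧
  T = T.image (·⁻¹) ∧
  (∑ t ∈ T, MonoidAlgebra.single t (1 : ℤ)) * (∑ t ∈ T, MonoidAlgebra.single t (1 : ℤ))
    = 2 * (∑ g : G, MonoidAlgebra.single g (1 : ℤ))
      + (∑ t ∈ T, MonoidAlgebra.single (t ^ 2) (1 : ℤ))
      + MonoidAlgebra.single (1 : G) (2 * (n : ℤ) - 2)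

/-- `m₂ T g`: the number of pairs `(t₁,t₂) ∈ T × T` with `t₁·t₂² = g`,
i.e. the coefficient of `g` in the group-ring product `T·T⁽²⁾`. -/
def m2 {G : Type} [CommGroup G] [DecidableEq G] (T : Finset G) (g : G) : ℕ :=
  ((T ×ˢ T).filter (fun p => p.1 * p.2 ^ 2 = g)).card

/-!
Summing `m₂` over `G` counts all of `T × T`, giving (1). For (3) one needs `∑ m₂²`, the number
of solutions of `t₁·s₁² = t₂·s₂²` in `T`. Since `T = T⁻¹`, the substitution
`(t₁, s₁, t₂, s₂) ↦ (t₁, t₂⁻¹, s₁⁻¹, s₂)` turns these into the solutions of `t·t' = (s·s')²`,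
whose number is `∑_{s, s' ∈ T} r((s·s')²)` with `r(g)` the coefficient of `g` in `T·T`, read off
from `T·T = 2·G + T⁽²⁾ + (2n-2)·e`. Squaring is injective because `|G|` is odd, and the count comes
out as `12n² + 12n + |T ∩ T⁽²⁾|`. Finally `2 = 3m - m² + (m - 1)(m - 2)` for every `m`; summing
it with `m = m₂(g)` over the `g` with `m₂(g) ≥ 1`, outside of which `3m - m²` vanishes, gives (3).
-/

open Finset

namespace Finset
variable {α β : Type*}

theorem sum_card_fiberwise_sq [DecidableEq β] [Fintype β] (s : Finset α) (f : α → β) :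
    ∑ b, #{a ∈ s | f a = b} ^ 2 = #{x ∈ s ×ˢ s | f x.1 = f x.2} := by
  rw [card_eq_sum_card_fiberwise (f := fun x => f x.1) (t := univ)
    (fun _ _ => mem_coe.2 (mem_univ _))]
  refine sum_congr rfl fun b _ => ?_
  rw [sq, ← card_product]
  congr 1
  ext x
  simp only [mem_filter, mem_product]
  grind

theorem card_filter_product_eq_sum (s : Finset α) (t : Finset β) (p : α × β → Prop)
    [DecidablePred p] :
    #{x ∈ s ×ˢ t | p x} = ∑ b ∈ t, #{a ∈ s | p (a, b)} := by
  simp only [card_filter]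
  exact sum_product_right ..

end Finset

theorem MonoidAlgebra.coeff_sum_single_one {M R : Type*} [DecidableEq M] [Semiring R]
    (s : Finset M) (m : M) :
    (∑ x ∈ s, single x (1 : R)).coeff m = if m ∈ s then 1 else 0 := by
  simp [Finsupp.single_apply]

theorem MonoidAlgebra.coeff_sum_single_one_mul_sum_single_one {M R : Type*} [Monoid M]
    [DecidableEq M] [Semiring R] (s t : Finset M) (m : M) :
    ((∑ x ∈ s, single x (1 : R)) * ∑ y ∈ t, single y (1 : R)).coeff m
      = #{p ∈ s ×ˢ t | p.1 * p.2 = m} := by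
  simp [sum_mul_sum, ← sum_product', Finsupp.single_apply]

theorem pow_two_injective_of_odd_card {G : Type*} [Group G] (h : Odd (Nat.card G)) :
    Function.Injective (fun x : G => x ^ 2) :=
  (powCoprime (Nat.coprime_two_right.2 h)).injective

theorem two_mul_card_filter_one_le {α : Type*} [Fintype α] (f : α → ℕ) :
    (2 : ℤ) * #{a | 1 ≤ f a}
      = 3 * ∑ a, (f a : ℤ) - ∑ a, (f a : ℤ) ^ 2
        + ∑ a with 1 ≤ f a, ((f a : ℤ) - 1) * ((f a : ℤ) - 2) := by
  have hsupport : 3 * ∑ a, (f a : ℤ) - ∑ a, (f a : ℤ) ^ 2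
      = ∑ a with 1 ≤ f a, (3 * (f a : ℤ) - f a ^ 2) := by
    rw [mul_sum, ← sum_sub_distrib, sum_filter_of_ne]
    intro a _ h
    by_contra h'
    simp_all
  rw [hsupport, ← sum_add_distrib, mul_comm, ← nsmul_eq_mul, ← sum_const]
  exact sum_congr rfl fun a _ => by ring

section m2
variable {G : Type} [CommGroup G] [DecidableEq G]

theorem sum_m2_eq_card_sq [Fintype G] (T : Finset G) : ∑ g, m2 T g = #T ^ 2 := by
  rw [sq, ← card_product, card_eq_sum_card_fiberwise (f := fun p : G × G => p.1 * p.2 ^ 2)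
    (t := univ) (fun _ _ => mem_coe.2 (mem_univ _))]
  rfl

theorem sum_m2_sq_eq_card_filter [Fintype G] (T : Finset G) :
    ∑ g, m2 T g ^ 2 = #{x ∈ (T ×ˢ T) ×ˢ (T ×ˢ T) | x.1.1 * x.1.2 ^ 2 = x.2.1 * x.2.2 ^ 2} :=
  sum_card_fiberwise_sq (T ×ˢ T) fun p => p.1 * p.2 ^ 2

theorem card_filter_mul_sq_eq_of_inv_mem {T : Finset G} (hT : ∀ x ∈ T, x⁻¹ ∈ T) :
    #{x ∈ (T ×ˢ T) ×ˢ (T ×ˢ T) | x.1.1 * x.1.2 ^ 2 = x.2.1 * x.2.2 ^ 2}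
      = #{x ∈ (T ×ˢ T) ×ˢ (T ×ˢ T) | x.1.1 * x.1.2 = (x.2.1 * x.2.2) ^ 2} := by
  let σ : (G × G) × (G × G) → (G × G) × (G × G) := fun x => ((x.1.1, x.2.1⁻¹), (x.1.2⁻¹, x.2.2))
  have hσ : ∀ x, σ (σ x) = x := fun _ => by simp [σ]
  refine card_nbij' σ σ ?_ ?_ (fun x _ => hσ x) (fun x _ => hσ x)
  all_goals
    rintro ⟨⟨a, b⟩, ⟨c, d⟩⟩ hx
    simp only [coe_filter, mem_product, Set.mem_ofPred_eq, σ] at hx ⊢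
    refine ⟨⟨⟨hx.1.1.1, hT _ hx.1.2.1⟩, ⟨hT _ hx.1.1.2, hx.1.2.2⟩⟩, ?_⟩
    rw [← mul_inv_eq_one] at hx ⊢
    convert hx.2 using 1
    simp only [mul_inv, inv_pow, inv_inv, mul_pow]
    ac_rfl

end m2

namespace IsPerfectTilingSubset
variable {G : Type} [CommGroup G] [Fintype G] [DecidableEq G] {n : ℕ} {T : Finset G}

theorem sq_injective (hT : IsPerfectTilingSubset n T) :
    Function.Injective (fun x : G => x ^ 2) :=
  pow_two_injective_of_odd_card (by
    rw [Nat.card_eq_fintype_card, hT.1]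
    exact odd_two_mul_add_one _)

theorem inv_mem (hT : IsPerfectTilingSubset n T) {x : G} (hx : x ∈ T) : x⁻¹ ∈ T := by
  rw [hT.2.2.2.1]
  exact mem_image_of_mem _ hx

theorem one_mem_image_sq (hT : IsPerfectTilingSubset n T) : (1 : G) ∈ T.image (· ^ 2) :=
  mem_image.2 ⟨1, hT.2.2.1, one_pow 2⟩

theorem card_filter_mul_eq (hT : IsPerfectTilingSubset n T) (g : G) :
    (#{p ∈ T ×ˢ T | p.1 * p.2 = g} : ℤ)
      = 2 + (if g ∈ T.image (· ^ 2) then 1 else 0) + if g = 1 then 2 * (n : ℤ) - 2 else 0 := by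
  have h := congrArg (MonoidAlgebra.coeff · g) hT.2.2.2.2
  rw [← sum_image (f := fun u => MonoidAlgebra.single u (1 : ℤ))
    fun _ _ _ _ h => hT.sq_injective h] at h
  simp only [two_mul, MonoidAlgebra.coeff_add, Finsupp.add_apply,
    MonoidAlgebra.coeff_sum_single_one_mul_sum_single_one, MonoidAlgebra.coeff_sum_single_one,
    MonoidAlgebra.coeff_single, Finsupp.single_apply, mem_univ, if_true,
    eq_comm (a := (1 : G))] at h
  rw [h, one_add_one_eq_two, ← two_mul]

theorem sum_card_filter_mul_eq (hT : IsPerfectTilingSubset n T) {ι : Type*} (s : Finset ι)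
    (φ : ι → G) :
    ∑ i ∈ s, (#{p ∈ T ×ˢ T | p.1 * p.2 = φ i} : ℤ)
      = 2 * #s + #{i ∈ s | φ i ∈ T.image (· ^ 2)} + (2 * (n : ℤ) - 2) * #{i ∈ s | φ i = 1} := by
  simp only [hT.card_filter_mul_eq, sum_add_distrib, sum_const, sum_boole, nsmul_eq_mul,
    ← sum_filter, mul_comm]

theorem sum_m2_sq_eq (hT : IsPerfectTilingSubset n T) :
    ∑ g, (m2 T g : ℤ) ^ 2 = 12 * n ^ 2 + 12 * n + #(T ∩ T.image (· ^ 2)) := by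
  have hsq := hT.sq_injective
  have hmem : (#{b ∈ T ×ˢ T | b.1 * b.2 ∈ T} : ℤ)
      = 2 * #T + #(T ∩ T.image (· ^ 2)) + (2 * n - 2) := by
    rw [← sum_card_fiberwise_eq_card_filter, Nat.cast_sum, hT.sum_card_filter_mul_eq T fun x => x,
      filter_mem_eq_inter, filter_eq', if_pos hT.2.2.1, card_singleton]
    push_cast
    ring
  have hone : (#{b ∈ T ×ˢ T | b.1 * b.2 = 1} : ℤ) = 2 * n + 1 := by
    rw [hT.card_filter_mul_eq, if_pos hT.one_mem_image_sq, if_pos rfl]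
    ring
  calc ∑ g, (m2 T g : ℤ) ^ 2
      = #{x ∈ (T ×ˢ T) ×ˢ (T ×ˢ T) | x.1.1 * x.1.2 = (x.2.1 * x.2.2) ^ 2} := by
        rw [← card_filter_mul_sq_eq_of_inv_mem fun _ => hT.inv_mem, ← sum_m2_sq_eq_card_filter]
        push_cast
        rfl
    _ = ∑ b ∈ T ×ˢ T, (#{p ∈ T ×ˢ T | p.1 * p.2 = (b.1 * b.2) ^ 2} : ℤ) := by
        rw [card_filter_product_eq_sum, Nat.cast_sum]
    _ = 2 * #(T ×ˢ T) + #{b ∈ T ×ˢ T | b.1 * b.2 ∈ T}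
          + (2 * n - 2) * #{b ∈ T ×ˢ T | b.1 * b.2 = 1} := by
        simp only [hT.sum_card_filter_mul_eq, hsq.mem_finset_image, hsq.eq_iff' (one_pow 2)]
    _ = 12 * n ^ 2 + 12 * n + #(T ∩ T.image (· ^ 2)) := by
        rw [hmem, hone, card_product, hT.2.1]
        push_cast
        ring

end IsPerfectTilingSubset

theorem stmt4_general (n : ℕ) {G : Type} [CommGroup G] [Fintype G] [DecidableEq G]
    (T : Finset G) (hT : IsPerfectTilingSubset n T) :
    (∑ g : G, m2 T g) = 4 * n ^ 2 + 4 * n + 1 ∧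
    Fintype.card G = 2 * n ^ 2 + 1 ∧
    (2 : ℤ) * ((Finset.univ.filter (fun g : G => 1 ≤ m2 T g)).card)
      = 2 - (((T.erase 1) ∩ ((T.image (· ^ 2)).erase 1)).card : ℤ)
        + ∑ g ∈ Finset.univ.filter (fun g : G => 1 ≤ m2 T g),
            ((m2 T g : ℤ) - 1) * ((m2 T g : ℤ) - 2) := by
  have hsum : ∑ g, m2 T g = (2 * n + 1) ^ 2 := by rw [sum_m2_eq_card_sq, hT.2.1]
  refine ⟨by rw [hsum]; ring, hT.1, ?_⟩
  have hinter : #(T.erase 1 ∩ (T.image (· ^ 2)).erase 1) + 1 = #(T ∩ T.image (· ^ 2)) := by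
    rw [erase_inter, inter_erase, erase_idem,
      card_erase_add_one (mem_inter.2 ⟨hT.2.2.1, hT.one_mem_image_sq⟩)]
  rw [two_mul_card_filter_one_le, ← Nat.cast_sum, hsum, hT.sum_m2_sq_eq, ← hinter]
  push_cast
  ring

theorem stmt4 (n : ℕ) (hn : 3 ≤ n) {G : Type} [CommGroup G] [Fintype G] [DecidableEq G]
    (T : Finset G) (hT : IsPerfectTilingSubset n T) :
    (∑ g : G, m2 T g) = 4 * n ^ 2 + 4 * n + 1 ∧
    Fintype.card G = 2 * n ^ 2 + 1 ∧
    (2 : ℤ) * ((Finset.univ.filter (fun g : G => 1 ≤ m2 T g)).card)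
      = 2 - (((T.erase 1) ∩ ((T.image (· ^ 2)).erase 1)).card : ℤ)
        + ∑ g ∈ Finset.univ.filter (fun g : G => 1 ≤ m2 T g),
            ((m2 T g : ℤ) - 1) * ((m2 T g : ℤ) - 2) :=
  stmt4_general n T hT
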